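/- Let (Λ_Q, f) be a C^{1+Lip} expansive and transitive Markov system. Then χ(x) ≥ 0 for every x ∈ Λ_Q. -/

import Mathlib

open Set Metric Filter MeasureTheory
open scoped Classical

/-- The word `[ω 0, ω 1, …, ω (n-1)]` read off from the sequence `ω`. -/
def wordOf {p : ℕ} (ω : ℕ → Fin p) (n : ℕ) : List (Fin p) :=
  (List.range n).map ω

/-- The cylinder sets `Δ_{i₁…iₙ} = g_{i₁…i_{n-1}}(I_{iₙ})` of the iterated function
system given by the big interval `I`, the subintervals `Isub i` and the maps `g i`;
by convention `Δ_∅ = I`. -/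
def cylOf {p : ℕ} (I : Set ℝ) (Isub : Fin p → Set ℝ) (g : Fin p → ℝ → ℝ) :
    List (Fin p) → Set ℝ
  | [] => I
  | [i] => Isub i
  | i :: j :: w => g i '' cylOf I Isub g (j :: w)

/-- The sequence `ω` contains the word `w` as a sub-word starting at position `n`. -/
def containsAt {p : ℕ} (ω : ℕ → Fin p) (w : List (Fin p)) (n : ℕ) : Prop :=
  ∀ k : ℕ, (hk : k < w.length) → ω (n + k) = w.get ⟨k, hk⟩

/-- The sequence `ω` belongs to `Σ_Q`, i.e. it contains no word of `Q` as a sub-word. -/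
def avoids {p : ℕ} (Q : Finset (List (Fin p))) (ω : ℕ → Fin p) : Prop :=
  ∀ w ∈ Q, ∀ n : ℕ, ¬ containsAt ω w n

/-- The limit set `Λ_Q = π(Σ_Q)`: points lying, for some `ω ∈ Σ_Q`, in all the
cylinders `Δ_{ω₀…ω_{n-1}}`. -/
def limitSetOf {p : ℕ} (I : Set ℝ) (Isub : Fin p → Set ℝ) (g : Fin p → ℝ → ℝ)
    (Q : Finset (List (Fin p))) : Set ℝ :=
  { x | ∃ ω : ℕ → Fin p, avoids Q ω ∧ ∀ n : ℕ, x ∈ cylOf I Isub g (wordOf ω n) }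

/-- `gIter g ω n = g_{i_n … i_1} = g_{ω (n-1)} ∘ ⋯ ∘ g_{ω 0}`. -/
def gIter {p : ℕ} (g : Fin p → ℝ → ℝ) (ω : ℕ → Fin p) : ℕ → ℝ → ℝ
  | 0 => id
  | n + 1 => g (ω n) ∘ gIter g ω n

/-- The derivative of the composition `gIter g ω n` at `x` (chain rule product). -/
noncomputable def gIterDer {p : ℕ} (g gder : Fin p → ℝ → ℝ) (ω : ℕ → Fin p)
    (n : ℕ) (x : ℝ) : ℝ :=
  ∏ k ∈ Finset.range n, gder (ω k) (gIter g ω k x)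

/-- Prepending the finite word `w` to the infinite sequence `ω`. -/
def prependWord {p : ℕ} (w : List (Fin p)) (ω : ℕ → Fin p) : ℕ → Fin p :=
  fun n => if h : n < w.length then w.get ⟨n, h⟩ else ω (n - w.length)

/-- `l(Σ_Q)`: the minimum, over all finite sets `Q'` of words with `Σ_{Q'} = Σ_Q`,
of the maximal length `l(Q')` of words of `Q'`. -/
noncomputable def minRepLen {p : ℕ} (Q : Finset (List (Fin p))) : ℕ :=
  sInf { n : ℕ | ∃ Q' : Finset (List (Fin p)),
    (∀ ω : ℕ → Fin p, avoids Q' ω ↔ avoids Q ω) ∧ Q'.sup List.length = n }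

/-- A `C^{1+Lip}` expansive and transitive Markov system `(Λ_Q, f)`. -/
structure ExpansiveMarkovSystem (p : ℕ) where
  /-- the alphabet is nonempty -/
  hp : 0 < p
  /-- the ambient closed interval `I` -/
  I : Set ℝ
  hI : ∃ a b : ℝ, a < b ∧ I = Set.Icc a b
  /-- the pairwise disjoint closed subintervals `I₁, …, I_p` -/
  Isub : Fin p → Set ℝ
  hIsub : ∀ i, ∃ a b : ℝ, a < b ∧ Isub i = Set.Icc a b
  hsubI : ∀ i, Isub i ⊆ I
  hdisj : ∀ i j, i ≠ j → Disjoint (Isub i) (Isub j)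
  /-- the contractions `g i`, defined on `⋃ j, Isub j` -/
  g : Fin p → ℝ → ℝ
  /-- the derivative of `g i` on `⋃ j, Isub j` -/
  gder : Fin p → ℝ → ℝ
  hg_inj : ∀ i, Set.InjOn (g i) (⋃ j, Isub j)
  hg_range : ∀ i, g i '' (⋃ j, Isub j) ⊆ interior (Isub i)
  hg_deriv : ∀ i, ∀ x ∈ ⋃ j, Isub j,
    HasDerivWithinAt (g i) (gder i x) (⋃ j, Isub j) x
  hgder_ne : ∀ i, ∀ x ∈ ⋃ j, Isub j, gder i x ≠ 0
  hgder_cont : ∀ i, ContinuousOn (gder i) (⋃ j, Isub j)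
  /-- `log |g i'|` is Lipschitz on the domain -/
  hgder_lip : ∀ i, ∃ θ : ℝ, ∀ x ∈ ⋃ j, Isub j, ∀ y ∈ ⋃ j, Isub j,
    abs (Real.log (abs (gder i x)) - Real.log (abs (gder i y))) ≤ θ * |x - y|
  /-- the expanding map `f`, with `f (g i x) = x` -/
  f : ℝ → ℝ
  /-- the derivative `f'` of `f` on the ranges of the `g i` -/
  fder : ℝ → ℝ
  hf : ∀ i, ∀ x ∈ ⋃ j, Isub j, f (g i x) = x
  hfder : ∀ i, ∀ x ∈ ⋃ j, Isub j, fder (g i x) = (gder i x)⁻¹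
  /-- the generator (expansivity) condition: `d_n → 0` -/
  hgen : ∀ ε : ℝ, 0 < ε → ∃ N : ℕ, ∀ w : List (Fin p), N ≤ w.length →
    Metric.diam (cylOf I Isub g w) < ε
  /-- the finite set of forbidden words -/
  Q : Finset (List (Fin p))
  /-- `Σ_Q` is completely invariant: `σ(Σ_Q) = Σ_Q` -/
  hQinv : ∀ ω : ℕ → Fin p, avoids Q ω →
    ∃ ω' : ℕ → Fin p, avoids Q ω' ∧ ∀ n : ℕ, ω' (n + 1) = ω n
  /-- `f|Λ_Q` is topologically transitive -/
  htrans : ∀ U V : Set ℝ, IsOpen U → IsOpen V →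
    (U ∩ limitSetOf I Isub g Q).Nonempty → (V ∩ limitSetOf I Isub g Q).Nonempty →
    ∃ n : ℕ, ∃ x ∈ U ∩ limitSetOf I Isub g Q, f^[n] x ∈ V

namespace ExpansiveMarkovSystem

variable {p : ℕ} (S : ExpansiveMarkovSystem p)

/-- The common domain `⋃ j, I_j` of the maps `g i`. -/
def dom : Set ℝ := ⋃ j, S.Isub j

/-- The cylinder `Δ_w` associated to the word `w`. -/
def cyl (w : List (Fin p)) : Set ℝ := cylOf S.I S.Isub S.g w

/-- The limit set `Λ_Q`. -/
def limitSet : Set ℝ := limitSetOf S.I S.Isub S.g S.Q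

/-- The domain of `f`, i.e. the union of the ranges of the `g i`. -/
def domF : Set ℝ := ⋃ i, S.g i '' S.dom

/-- The derivative `(fⁿ)'(x)` of the `n`-th iterate of `f` at `x`. -/
noncomputable def derIter (n : ℕ) (x : ℝ) : ℝ :=
  ∏ k ∈ Finset.range n, S.fder (S.f^[k] x)

/-- The Lyapunov exponent `χ(x) = limsup (1/n) log |(fⁿ)'(x)|`. -/
noncomputable def lyap (x : ℝ) : ℝ :=
  Filter.limsup (fun n : ℕ => Real.log |S.derIter n x| / n) Filter.atTop

/-- The set `H` of points of `Λ_Q` with infinitely many hyperbolic instants. -/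
def hypSet : Set ℝ :=
  { x ∈ S.limitSet | ∃ c₁ : ℝ, 0 < c₁ ∧ ∃ c₂ : ℝ, 0 < c₂ ∧
      ∃ n : ℕ → ℕ, StrictMono n ∧
        ∃ r : ℕ → ℝ, (∀ k, 0 < r k) ∧ Antitone r ∧
          Filter.Tendsto r Filter.atTop (nhds 0) ∧
          ∀ k : ℕ,
            (∀ y ∈ Metric.ball x (r k), ∀ j < n k, S.f^[j] y ∈ S.domF) ∧
            c₁ < Metric.diam (S.f^[n k] '' Metric.ball x (r k)) ∧
            (∀ y ∈ Metric.ball x (r k), ∀ z ∈ Metric.ball x (r k),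
              |S.derIter (n k) y| / |S.derIter (n k) z| < c₂) }

/-- `x` is a parabolic periodic point: `f^m(x) = x` and `|(f^m)'(x)| = 1`. -/
def IsParabolicPeriodic (x : ℝ) : Prop :=
  x ∈ S.limitSet ∧ ∃ m : ℕ, 1 ≤ m ∧ S.f^[m] x = x ∧ |S.derIter m x| = 1

/-- `ν` is a `t`-conformal (Borel probability) measure supported on `Λ_Q`. -/
def IsConformal (ν : Measure ℝ) (t : ℝ) : Prop :=
  IsProbabilityMeasure ν ∧ ν S.limitSetᶜ = 0 ∧
    ∀ A : Set ℝ, MeasurableSet A → A ⊆ S.limitSet → Set.InjOn S.f A →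
      ν (S.f '' A) = ∫⁻ x in A, ENNReal.ofReal (|S.fder x| ^ t) ∂ν

/-- `t_c = inf {t ≥ 0 : a t-conformal measure on Λ_Q exists}`. -/
noncomputable def tc : ℝ :=
  sInf { t : ℝ | 0 ≤ t ∧ ∃ ν : Measure ℝ, S.IsConformal ν t }

/-- `n` is a hyperbolic time for `x` with exponent `α`. -/
def IsHypTime (α : ℝ) (x : ℝ) (n : ℕ) : Prop :=
  ∀ k : ℕ, 1 ≤ k → k ≤ n → Real.exp (k * α) ≤ |S.derIter k (S.f^[n - k] x)|

/-- `H_HT(α)`: the points of `Λ_Q` with infinitely many hyperbolic times with exponent `α`. -/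
def HHT (α : ℝ) : Set ℝ :=
  { x ∈ S.limitSet | ∀ N : ℕ, ∃ n : ℕ, N ≤ n ∧ S.IsHypTime α x n }

end ExpansiveMarkovSystem

/-!
Write `x = π(ω)` and `x_k = fᵏ(x)`, so that `x_k = g_{ω_k}(x_{k+1})` and
`|(fⁿ)'(x)|⁻¹ = ∏_{k<n} |g'_{ω_k}(x_{k+1})|`. By the mean value theorem and the Lipschitz bound
on `log |g'|`, each factor times `|Δ_{ω_{k+1}…ω_n}|` is at most
`|Δ_{ω_k…ω_n}| · exp(θ |Δ_{ω_{k+1}…ω_n}|)`. Telescoping gives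
`∏_{k<n} |g'_{ω_k}(x_{k+1})| ≤ C · exp(θ (d_1 + ⋯ + d_n))`. Since `d_m → 0`, the Cesàro means
`(d_1 + ⋯ + d_n) / n` tend to `0`, so `(1/n) log |(fⁿ)'(x)| ≥ -o(1)`.
-/

open Topology

theorem prod_mul_le_mul_prod_of_mul_le {u D e : ℕ → ℝ} {n : ℕ} (hu : ∀ k, 0 ≤ u k)
    (he : ∀ k, 0 ≤ e k) (h : ∀ k < n, u k * D (k + 1) ≤ D k * e k) :
    (∏ k ∈ Finset.range n, u k) * D n ≤ D 0 * ∏ k ∈ Finset.range n, e k := by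
  induction n with
  | zero => simp
  | succ n ih =>
    have hP : 0 ≤ ∏ k ∈ Finset.range n, u k := Finset.prod_nonneg fun k _ => hu k
    calc (∏ k ∈ Finset.range (n + 1), u k) * D (n + 1)
        = (∏ k ∈ Finset.range n, u k) * (u n * D (n + 1)) := by
          rw [Finset.prod_range_succ, mul_assoc]
      _ ≤ (∏ k ∈ Finset.range n, u k) * (D n * e n) :=
          mul_le_mul_of_nonneg_left (h n n.lt_succ_self) hP
      _ = ((∏ k ∈ Finset.range n, u k) * D n) * e n := by ring
      _ ≤ (D 0 * ∏ k ∈ Finset.range n, e k) * e n :=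
          mul_le_mul_of_nonneg_right (ih fun k hk => h k (hk.trans n.lt_succ_self)) (he n)
      _ = D 0 * ∏ k ∈ Finset.range (n + 1), e k := by rw [Finset.prod_range_succ, mul_assoc]

theorem abs_le_abs_mul_exp_of_abs_log_abs_sub_le {a b c : ℝ} (ha : a ≠ 0) (hb : b ≠ 0)
    (h : abs (Real.log |a| - Real.log |b|) ≤ c) : |a| ≤ |b| * Real.exp c := by
  have hlog : Real.log |a| ≤ Real.log |b| + c := by
    linarith [le_abs_self (Real.log |a| - Real.log |b|)]
  calc |a| = Real.exp (Real.log |a|) := (Real.exp_log (abs_pos.2 ha)).symm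
    _ ≤ Real.exp (Real.log |b| + c) := Real.exp_le_exp.2 hlog
    _ = |b| * Real.exp c := by rw [Real.exp_add, Real.exp_log (abs_pos.2 hb)]

/-- Mean value theorem plus the distortion bound `|g' z| ≤ |g' ξ| e^{θ |z - ξ|}`. -/
theorem abs_deriv_mul_diam_Icc_le {g g' : ℝ → ℝ} {a b θ z : ℝ} (hθ : 0 ≤ θ)
    (hg : ∀ x ∈ Icc a b, HasDerivWithinAt g (g' x) (Icc a b) x)
    (hg' : ∀ x ∈ Icc a b, g' x ≠ 0)
    (hlip : ∀ x ∈ Icc a b, ∀ y ∈ Icc a b, abs (Real.log |g' x| - Real.log |g' y|) ≤ θ * |x - y|)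
    (hz : z ∈ Icc a b) :
    |g' z| * diam (Icc a b) ≤ diam (g '' Icc a b) * Real.exp (θ * diam (Icc a b)) := by
  have hcont : ContinuousOn g (Icc a b) := fun x hx => (hg x hx).continuousWithinAt
  rcases (hz.1.trans hz.2).eq_or_lt with rfl | hab
  · simp
  rw [Real.diam_Icc hab.le]
  obtain ⟨ξ, hξ, hslope⟩ := exists_hasDerivAt_eq_slope g g' hab hcont
    fun x hx => (hg x (Ioo_subset_Icc_self hx)).hasDerivAt (Icc_mem_nhds hx.1 hx.2)
  have hξ' : ξ ∈ Icc a b := Ioo_subset_Icc_self hξ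
  have hdist : |z - ξ| ≤ b - a :=
    abs_sub_le_iff.2 ⟨by linarith [hz.2, hξ'.1], by linarith [hz.1, hξ'.2]⟩
  have hdistortion : |g' z| ≤ |g' ξ| * Real.exp (θ * (b - a)) :=
    abs_le_abs_mul_exp_of_abs_log_abs_sub_le (hg' z hz) (hg' ξ hξ')
      ((hlip z hz ξ hξ').trans (mul_le_mul_of_nonneg_left hdist hθ))
  have hmvt : |g' ξ| * (b - a) ≤ diam (g '' Icc a b) := by
    have hba : |g' ξ| * (b - a) = dist (g b) (g a) := by
      rw [hslope, Real.dist_eq, abs_div, abs_of_pos (sub_pos.2 hab),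
        div_mul_cancel₀ _ (sub_pos.2 hab).ne']
    rw [hba]
    exact dist_le_diam_of_mem (isCompact_Icc.image_of_continuousOn hcont).isBounded
      (mem_image_of_mem g (right_mem_Icc.2 hab.le)) (mem_image_of_mem g (left_mem_Icc.2 hab.le))
  calc |g' z| * (b - a) ≤ |g' ξ| * Real.exp (θ * (b - a)) * (b - a) := by
        gcongr
    _ = |g' ξ| * (b - a) * Real.exp (θ * (b - a)) := by ring
    _ ≤ diam (g '' Icc a b) * Real.exp (θ * (b - a)) := by gcongr

theorem Real.limsup_nonneg_of_le_of_tendsto_zero {u v : ℕ → ℝ}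
    (hv : Tendsto v atTop (𝓝 0)) (h : ∀ n, v n ≤ u n) : 0 ≤ limsup u atTop := by
  by_cases hb : IsBoundedUnder (· ≤ ·) atTop u
  · rw [← hv.limsup_eq]
    exact limsup_le_limsup (Eventually.of_forall h) hv.isCoboundedUnder_le hb
  · rw [Real.limsup_of_not_isBoundedUnder hb]

theorem wordOf_length {p : ℕ} (ω : ℕ → Fin p) (n : ℕ) : (wordOf ω n).length = n := by
  simp [wordOf]

theorem wordOf_succ {p : ℕ} (ω : ℕ → Fin p) (n : ℕ) :
    wordOf ω (n + 1) = ω 0 :: wordOf (fun j => ω (j + 1)) n := by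
  simp [wordOf, List.range_succ_eq_map, Function.comp_def]

theorem wordOf_ne_nil {p : ℕ} (ω : ℕ → Fin p) {n : ℕ} (hn : n ≠ 0) : wordOf ω n ≠ [] :=
  List.ne_nil_of_length_pos (by rw [wordOf_length]; omega)

theorem wordOf_one {p : ℕ} (ω : ℕ → Fin p) : wordOf ω 1 = [ω 0] := by
  simp [wordOf]

namespace ExpansiveMarkovSystem

variable {p : ℕ} (S : ExpansiveMarkovSystem p)

theorem cyl_singleton (i : Fin p) : S.cyl [i] = S.Isub i := rfl

theorem cyl_cons (i : Fin p) {w : List (Fin p)} (hw : w ≠ []) :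
    S.cyl (i :: w) = S.g i '' S.cyl w := by
  cases w with
  | nil => exact absurd rfl hw
  | cons j w => rfl

theorem Isub_subset_dom (i : Fin p) : S.Isub i ⊆ S.dom := subset_iUnion S.Isub i

theorem exists_cyl_eq_Icc : ∀ {w : List (Fin p)}, w ≠ [] →
    ∃ a b : ℝ, a ≤ b ∧ S.cyl w = Icc a b ∧ Icc a b ⊆ S.dom
  | [], hw => absurd rfl hw
  | [i], _ => by
    obtain ⟨a, b, hab, hEq⟩ := S.hIsub i
    exact ⟨a, b, hab.le, hEq, hEq ▸ S.Isub_subset_dom i⟩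
  | i :: j :: w, _ => by
    obtain ⟨a, b, hab, hEq, hsub⟩ := exists_cyl_eq_Icc (List.cons_ne_nil j w)
    have hcont : ContinuousOn (S.g i) (Icc a b) :=
      fun x hx => (S.hg_deriv i x (hsub hx)).continuousWithinAt.mono hsub
    have himage : S.g i '' Icc a b ⊆ S.dom :=
      ((image_mono hsub).trans (S.hg_range i)).trans (interior_subset.trans (S.Isub_subset_dom i))
    have hne : (S.g i '' Icc a b).Nonempty := (nonempty_Icc.2 hab).image _
    rw [hcont.image_Icc hab] at himage hne
    refine ⟨_, _, nonempty_Icc.1 hne, ?_, himage⟩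
    rw [S.cyl_cons i (List.cons_ne_nil j w), hEq]
    exact hcont.image_Icc hab

theorem cyl_subset_dom {w : List (Fin p)} (hw : w ≠ []) : S.cyl w ⊆ S.dom := by
  obtain ⟨a, b, -, hEq, hsub⟩ := S.exists_cyl_eq_Icc hw
  exact hEq ▸ hsub

theorem cyl_subset_I : ∀ w : List (Fin p), S.cyl w ⊆ S.I
  | [] => subset_rfl
  | [i] => S.hsubI i
  | i :: j :: w =>
    ((image_mono (S.cyl_subset_dom (List.cons_ne_nil j w))).trans (S.hg_range i)).trans
      (interior_subset.trans (S.hsubI i))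

theorem isBounded_I : Bornology.IsBounded S.I := by
  obtain ⟨a, b, -, hEq⟩ := S.hI
  exact hEq ▸ isBounded_Icc a b

theorem diam_cyl_le (w : List (Fin p)) : diam (S.cyl w) ≤ diam S.I :=
  diam_mono (S.cyl_subset_I w) S.isBounded_I

def IsDistortionConst (θ : ℝ) : Prop :=
  0 ≤ θ ∧ ∀ i, ∀ x ∈ S.dom, ∀ y ∈ S.dom,
    abs (Real.log |S.gder i x| - Real.log |S.gder i y|) ≤ θ * |x - y|

theorem exists_isDistortionConst : ∃ θ, S.IsDistortionConst θ := by
  choose θ hθ using S.hgder_lip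
  refine ⟨∑ i, |θ i|, Finset.sum_nonneg fun i _ => abs_nonneg _, fun i x hx y hy => ?_⟩
  refine (hθ i x hx y hy).trans (mul_le_mul_of_nonneg_right ?_ (abs_nonneg _))
  exact (le_abs_self _).trans
    (Finset.single_le_sum (f := fun i => |θ i|) (fun _ _ => abs_nonneg _) (Finset.mem_univ i))

theorem abs_gder_mul_diam_cyl_le {θ : ℝ} (hθ : S.IsDistortionConst θ)
    (i : Fin p) {w : List (Fin p)} (hw : w ≠ []) {z : ℝ} (hz : z ∈ S.cyl w) :
    |S.gder i z| * diam (S.cyl w) ≤ diam (S.cyl (i :: w)) * Real.exp (θ * diam (S.cyl w)) := by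
  obtain ⟨a, b, -, hEq, hsub⟩ := S.exists_cyl_eq_Icc hw
  rw [hEq] at hz
  rw [S.cyl_cons i hw, hEq]
  exact abs_deriv_mul_diam_Icc_le hθ.1 (fun x hx => (S.hg_deriv i x (hsub hx)).mono hsub)
    (fun x hx => S.hgder_ne i x (hsub hx)) (fun x hx y hy => hθ.2 i x (hsub hx) y (hsub hy)) hz

/-- The paper's `d_m`: the largest diameter of a cylinder of length `m`. -/
noncomputable def cylDiam (m : ℕ) : ℝ :=
  ⨆ w : {w : List (Fin p) // w.length = m}, diam (S.cyl w)

theorem diam_cyl_le_cylDiam (w : List (Fin p)) : diam (S.cyl w) ≤ S.cylDiam w.length :=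
  le_ciSup (f := fun v : {v : List (Fin p) // v.length = w.length} => diam (S.cyl v))
    ⟨diam S.I, by rintro _ ⟨v, rfl⟩; exact S.diam_cyl_le v⟩ ⟨w, rfl⟩

theorem tendsto_cylDiam : Tendsto S.cylDiam atTop (𝓝 0) := by
  refine Metric.tendsto_atTop.2 fun ε hε => ?_
  obtain ⟨N, hN⟩ := S.hgen (ε / 2) (half_pos hε)
  refine ⟨N, fun m hm => ?_⟩
  have hle : S.cylDiam m ≤ ε / 2 :=
    Real.iSup_le (fun w => (hN w (by rw [w.2]; exact hm)).le) (half_pos hε).le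
  have hnonneg : 0 ≤ S.cylDiam m := Real.iSup_nonneg fun _ => diam_nonneg
  rw [Real.dist_0_eq_abs, abs_of_nonneg hnonneg]
  linarith

theorem f_mem_cyl_and_g_f_eq {y : ℝ} {τ : ℕ → Fin p} (hy : ∀ m, y ∈ S.cyl (wordOf τ m)) :
    (∀ m, S.f y ∈ S.cyl (wordOf (fun j => τ (j + 1)) m)) ∧ S.g (τ 0) (S.f y) = y := by
  have hpos : ∀ m ≠ 0, S.f y ∈ S.cyl (wordOf (fun j => τ (j + 1)) m) ∧
      S.g (τ 0) (S.f y) = y := by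
    intro m hm
    have hym := hy (m + 1)
    rw [wordOf_succ, S.cyl_cons _ (wordOf_ne_nil _ hm)] at hym
    obtain ⟨u, hu, rfl⟩ := hym
    rw [S.hf _ u (S.cyl_subset_dom (wordOf_ne_nil _ hm) hu)]
    exact ⟨hu, rfl⟩
  refine ⟨fun m => ?_, (hpos 1 one_ne_zero).2⟩
  rcases Nat.eq_zero_or_pos m with rfl | hm
  · exact S.cyl_subset_I _ (hpos 1 one_ne_zero).1
  · exact (hpos m hm.ne').1

section Orbit

variable {S} {x : ℝ} {ω : ℕ → Fin p}

theorem iterate_mem_cyl (hx : ∀ m, x ∈ S.cyl (wordOf ω m)) (k m : ℕ) :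
    S.f^[k] x ∈ S.cyl (wordOf (fun j => ω (j + k)) m) := by
  induction k generalizing m with
  | zero => simpa using hx m
  | succ k ih =>
    rw [Function.iterate_succ_apply']
    simpa only [add_assoc, add_comm 1 k] using (S.f_mem_cyl_and_g_f_eq ih).1 m

theorem g_iterate_succ (hx : ∀ m, x ∈ S.cyl (wordOf ω m)) (k : ℕ) :
    S.g (ω k) (S.f^[k + 1] x) = S.f^[k] x := by
  simpa [Function.iterate_succ_apply'] using
    (S.f_mem_cyl_and_g_f_eq (iterate_mem_cyl hx k)).2

theorem iterate_mem_dom (hx : ∀ m, x ∈ S.cyl (wordOf ω m)) (k : ℕ) : S.f^[k] x ∈ S.dom := by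
  simpa [wordOf_one, cyl_singleton] using S.Isub_subset_dom _ (iterate_mem_cyl hx k 1)

theorem abs_derIter_eq (hx : ∀ m, x ∈ S.cyl (wordOf ω m)) (n : ℕ) :
    |S.derIter n x| = (∏ k ∈ Finset.range n, |S.gder (ω k) (S.f^[k + 1] x)|)⁻¹ := by
  have hfder : ∀ k, S.fder (S.f^[k] x) = (S.gder (ω k) (S.f^[k + 1] x))⁻¹ := fun k => by
    rw [← g_iterate_succ hx k, S.hfder _ _ (iterate_mem_dom hx (k + 1))]
  simp only [derIter, hfder, Finset.abs_prod, abs_inv, Finset.prod_inv_distrib]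

theorem prod_abs_gder_mul_diam_le (hx : ∀ m, x ∈ S.cyl (wordOf ω m)) {θ : ℝ}
    (hθ : S.IsDistortionConst θ) (n : ℕ) :
    (∏ k ∈ Finset.range n, |S.gder (ω k) (S.f^[k + 1] x)|) * diam (S.Isub (ω n)) ≤
      diam S.I * Real.exp (θ * ∑ k ∈ Finset.range n, S.cylDiam (k + 1)) := by
  set D : ℕ → ℝ := fun k => diam (S.cyl (wordOf (fun j => ω (j + k)) (n + 1 - k)))
  have hstep : ∀ k < n, |S.gder (ω k) (S.f^[k + 1] x)| * D (k + 1) ≤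
      D k * Real.exp (θ * D (k + 1)) := by
    intro k hk
    have hword : wordOf (fun j => ω (j + k)) (n + 1 - k) =
        ω k :: wordOf (fun j => ω (j + (k + 1))) (n + 1 - (k + 1)) := by
      rw [show n + 1 - k = n + 1 - (k + 1) + 1 by omega, wordOf_succ]
      simp only [zero_add, add_assoc, add_comm 1 k]
    simp only [D, hword]
    exact S.abs_gder_mul_diam_cyl_le hθ (ω k) (wordOf_ne_nil _ (by omega))
      (iterate_mem_cyl hx (k + 1) _)
  have hsum : ∑ k ∈ Finset.range n, D (k + 1) ≤ ∑ k ∈ Finset.range n, S.cylDiam (k + 1) := by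
    rw [← Finset.sum_range_reflect (fun k => S.cylDiam (k + 1))]
    refine Finset.sum_le_sum fun k hk => ?_
    have hk : k < n := Finset.mem_range.1 hk
    calc D (k + 1) ≤ S.cylDiam (wordOf (fun j => ω (j + (k + 1))) (n + 1 - (k + 1))).length :=
          S.diam_cyl_le_cylDiam _
      _ = S.cylDiam (n - 1 - k + 1) := by rw [wordOf_length]; congr 1; omega
  have hDn : D n = diam (S.Isub (ω n)) := by
    simp [D, wordOf_one, cyl_singleton]
  calc (∏ k ∈ Finset.range n, |S.gder (ω k) (S.f^[k + 1] x)|) * diam (S.Isub (ω n))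
      ≤ D 0 * ∏ k ∈ Finset.range n, Real.exp (θ * D (k + 1)) :=
        hDn ▸ prod_mul_le_mul_prod_of_mul_le (fun _ => abs_nonneg _)
          (fun _ => (Real.exp_pos _).le) hstep
    _ = D 0 * Real.exp (θ * ∑ k ∈ Finset.range n, D (k + 1)) := by
        rw [Finset.mul_sum, Real.exp_sum]
    _ ≤ diam S.I * Real.exp (θ * ∑ k ∈ Finset.range n, S.cylDiam (k + 1)) := by
        gcongr
        exacts [S.diam_cyl_le _, hθ.1]

theorem exists_neg_log_abs_derIter_le (hx : ∀ m, x ∈ S.cyl (wordOf ω m)) {θ : ℝ}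
    (hθ : S.IsDistortionConst θ) :
    ∃ c : ℝ, ∀ n,
      -Real.log |S.derIter n x| ≤ c + θ * ∑ k ∈ Finset.range n, S.cylDiam (k + 1) := by
  have : Nonempty (Fin p) := ⟨ω 0⟩
  obtain ⟨i₀, hi₀⟩ := Finite.exists_min fun i => diam (S.Isub i)
  have hL : 0 < diam (S.Isub i₀) := by
    obtain ⟨a, b, hab, hEq⟩ := S.hIsub i₀
    rw [hEq, Real.diam_Icc hab.le]
    linarith
  have hI : 0 < diam S.I := hL.trans_le (diam_mono (S.hsubI i₀) S.isBounded_I)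
  refine ⟨Real.log (diam S.I / diam (S.Isub i₀)), fun n => ?_⟩
  set P := ∏ k ∈ Finset.range n, |S.gder (ω k) (S.f^[k + 1] x)|
  have hP : 0 < P :=
    Finset.prod_pos fun k _ => abs_pos.2 (S.hgder_ne _ _ (iterate_mem_dom hx (k + 1)))
  have hbound : P ≤ diam S.I / diam (S.Isub i₀) *
      Real.exp (θ * ∑ k ∈ Finset.range n, S.cylDiam (k + 1)) := by
    rw [div_mul_eq_mul_div, le_div_iff₀ hL]
    exact (mul_le_mul_of_nonneg_left (hi₀ (ω n)) hP.le).trans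
      (prod_abs_gder_mul_diam_le hx hθ n)
  rw [abs_derIter_eq hx, Real.log_inv, neg_neg,
    ← Real.log_exp (θ * ∑ k ∈ Finset.range n, S.cylDiam (k + 1)),
    ← Real.log_mul (div_pos hI hL).ne' (Real.exp_pos _).ne']
  exact Real.log_le_log hP hbound

end Orbit

end ExpansiveMarkovSystem

/-- `χ(x) ≥ 0` for every `x ∈ Λ_Q`. -/
theorem lyap_nonneg {p : ℕ} (S : ExpansiveMarkovSystem p) (x : ℝ) (hx : x ∈ S.limitSet) :
    0 ≤ S.lyap x := by
  obtain ⟨ω, -, hω⟩ := hx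
  obtain ⟨θ, hθ⟩ := S.exists_isDistortionConst
  obtain ⟨c, hc⟩ := ExpansiveMarkovSystem.exists_neg_log_abs_derIter_le hω hθ
  refine Real.limsup_nonneg_of_le_of_tendsto_zero
    (v := fun n : ℕ => -(c / n + θ * ((n : ℝ)⁻¹ * ∑ k ∈ Finset.range n, S.cylDiam (k + 1))))
    ?_ fun n => ?_
  · have hcesaro := (S.tendsto_cylDiam.comp (tendsto_add_atTop_nat 1)).cesaro
    simpa using ((tendsto_const_div_atTop_nhds_zero_nat c).add (hcesaro.const_mul θ)).neg
  · have hrw : -(c / n + θ * ((n : ℝ)⁻¹ * ∑ k ∈ Finset.range n, S.cylDiam (k + 1))) =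
        -(c + θ * ∑ k ∈ Finset.range n, S.cylDiam (k + 1)) / n := by ring
    rw [hrw]
    exact div_le_div_of_nonneg_right (by linarith [hc n]) n.cast_nonneg
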